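/- The number D_1 = 3 + ζ² + ζ³ + ζ¹⁰ + ζ¹¹, with ζ = exp(2πi/13), is a real number, and it is a root of the cubic polynomial x³ − 8x² + 17x − 5 (equivalently, D_1 = 8/3 + (2/3)·Re((13/2)(−5 − 3i√3))^{1/3}). In particular D_1 ∈ Q(ζ₁₃). -/

import Mathlib

open Complex

/-- The Jones index of the extended Haagerup subfactor,
`D₁ = 3 + ζ² + ζ³ + ζ¹⁰ + ζ¹¹` with `ζ = exp(2πi/13)`. -/
noncomputable def D1 : ℂ :=
  3 + Complex.exp (2 * Real.pi * Complex.I / 13) ^ 2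
    + Complex.exp (2 * Real.pi * Complex.I / 13) ^ 3
    + Complex.exp (2 * Real.pi * Complex.I / 13) ^ 10
    + Complex.exp (2 * Real.pi * Complex.I / 13) ^ 11

/-!
`ζ² + ζ³ + ζ¹⁰ + ζ¹¹` is a Gaussian period: `{2, 3, 10, 11}` is the coset `2H` of the subgroup
`H = {±1, ±5}` of `(ℤ/13)ˣ`. The relations `ζ¹³ = 1` and `1 + ζ + ⋯ + ζ¹² = 0` alone show that
it is a root of the period polynomial `x³ + x² - 4x + 1`, which is the given cubic shifted by 3.
Complex conjugation sends `ζ` to `ζ⁻¹ = ζ¹²`, i.e. acts by `-1 ∈ H`, so it fixes the period.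
-/

open ComplexConjugate

def gaussPeriod13 {R : Type*} [Semiring R] (ζ : R) : R :=
  ζ ^ 2 + ζ ^ 3 + ζ ^ 10 + ζ ^ 11

theorem map_gaussPeriod13 {R S : Type*} [Semiring R] [Semiring S] (σ : R →+* S) (ζ : R) :
    σ (gaussPeriod13 ζ) = gaussPeriod13 (σ ζ) := by
  simp only [gaussPeriod13, map_add, map_pow]

theorem gaussPeriod13_mem {R S : Type*} [Semiring R] [SetLike S R] [SubsemiringClass S R]
    {s : S} {ζ : R} (hζ : ζ ∈ s) : gaussPeriod13 ζ ∈ s :=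
  add_mem (add_mem (add_mem (pow_mem hζ 2) (pow_mem hζ 3)) (pow_mem hζ 10)) (pow_mem hζ 11)

theorem gaussPeriod13_pow_twelve {R : Type*} [CommSemiring R] {ζ : R} (h13 : ζ ^ 13 = 1) :
    gaussPeriod13 (ζ ^ 12) = gaussPeriod13 ζ := by
  simp only [gaussPeriod13, ← pow_mul]
  rw [pow_eq_pow_mod (12 * 2) h13, pow_eq_pow_mod (12 * 3) h13, pow_eq_pow_mod (12 * 10) h13,
    pow_eq_pow_mod (12 * 11) h13]
  norm_num
  ring

theorem gaussPeriod13_period_poly_eq_zero {R : Type*} [CommRing R] {ζ : R} (h13 : ζ ^ 13 = 1)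
    (hsum : ∑ i ∈ Finset.range 13, ζ ^ i = 0) :
    gaussPeriod13 ζ ^ 3 + gaussPeriod13 ζ ^ 2 - 4 * gaussPeriod13 ζ + 1 = 0 := by
  simp only [Finset.sum_range_succ, Finset.sum_range_zero] at hsum
  unfold gaussPeriod13
  -- quotient by `ζ¹³ - 1`; the remainder is `5 (1 + ζ + ⋯ + ζ¹²)`
  linear_combination (4 + 5 * ζ + 9 * ζ ^ 2 + 9 * ζ ^ 3 + 4 * ζ ^ 4 + 3 * ζ ^ 5 + 3 * ζ ^ 6
    + 2 * ζ ^ 7 + 2 * ζ ^ 8 + 4 * ζ ^ 9 + 9 * ζ ^ 10 + 9 * ζ ^ 11 + 3 * ζ ^ 12 + ζ ^ 17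
    + 3 * ζ ^ 18 + 3 * ζ ^ 19 + ζ ^ 20) * h13 + 5 * hsum

theorem IsPrimitiveRoot.conj_eq_pow_pred {ζ : ℂ} {n : ℕ} (hζ : IsPrimitiveRoot ζ n)
    (hn : n ≠ 0) : conj ζ = ζ ^ (n - 1) := by
  rw [← inv_eq_conj (hζ.norm'_eq_one hn), eq_comm, ← mul_eq_one_iff_eq_inv₀ (hζ.ne_zero hn),
    ← pow_succ, Nat.sub_add_cancel (Nat.one_le_iff_ne_zero.mpr hn), hζ.pow_eq_one]

theorem D1_eq_three_add_gaussPeriod13 :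
    D1 = 3 + gaussPeriod13 (exp (2 * Real.pi * I / 13)) := by
  simp only [D1, gaussPeriod13]
  ring

theorem D1_real_and_root_of_cubic :
    D1.im = 0 ∧
    D1 ^ 3 - 8 * D1 ^ 2 + 17 * D1 - 5 = 0 ∧
    D1 ∈ IntermediateField.adjoin ℚ
        ({Complex.exp (2 * Real.pi * Complex.I / 13)} : Set ℂ) := by
  have hζ : IsPrimitiveRoot (exp (2 * Real.pi * I / 13)) 13 := by
    exact_mod_cast isPrimitiveRoot_exp 13 (by norm_num)
  have hperiod := gaussPeriod13_period_poly_eq_zero hζ.pow_eq_one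
    (hζ.geom_sum_eq_zero (by norm_num))
  rw [D1_eq_three_add_gaussPeriod13]
  refine ⟨?_, by linear_combination hperiod, ?_⟩
  · rw [← conj_eq_iff_im, map_add, map_ofNat, map_gaussPeriod13,
      hζ.conj_eq_pow_pred (by norm_num), gaussPeriod13_pow_twelve hζ.pow_eq_one]
  · exact add_mem (ofNat_mem _ 3)
      (gaussPeriod13_mem (IntermediateField.mem_adjoin_simple_self ℚ _))
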